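/- Let a ∈ ℂ with |a| < 1 and β ∈ ℝ, let M(z) = e^{iβ}·(z − a)/(1 − conj(a)·z), and let η : ℝ → ℝ be a continuous function with e^{iη(t)} = M(e^{it}) for all t ∈ ℝ. Let −π < θ_1 < θ_2 < ⋯ < θ_n ≤ π with θ_{n+1} := θ_1 + 2π, and let f : ℝ → ℝ be strictly convex on (0,∞) with f(1) = 0. For u in the open unit disk write φ_j(u) = ∫_{θ_j}^{θ_{j+1}} P(u,t) dt and φ̃_j(u) = ∫_{η(θ_j)}^{η(θ_{j+1})} P(u,t) dt. Then for all z, y in the open unit disk: Σ_{j=1}^n φ̃_j(M(z))·f(φ̃_j(M(y))/φ̃_j(M(z))) = Σ_{j=1}^n φ_j(z)·f(φ_j(y)/φ_j(z)). (Conformal invariance of the reduced f-divergence distance.) -/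

import Mathlib

/-!
The boundary map of `M` has the explicit smooth lift `t ↦ t + β - 2 arg (1 - conj a * e^{it})`,
with derivative `(1 - |a|²) / |1 - conj a * e^{it}|²`. Any other continuous lift `η` differs from
it by a constant in `2πℤ`, which the `2π`-periodic Poisson kernel does not see. The Möbius
identities `1 - |M u|² = (1 - |a|²)(1 - |u|²) / |1 - conj a * u|²` and
`|M u - M v|² = (1 - |a|²)² |u - v|² / (|1 - conj a * u|² |1 - conj a * v|²)` give
`P(M u, η t) η'(t) = P(u, t)`, so the substitution `s = η t` shows that every reduced coordinate
of `M u` over the arcs `[η θ_j, η θ_{j+1}]` equals the corresponding coordinate of `u`, and the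
two divergence sums agree term by term.
-/

/-- The Poisson kernel of the unit disk:
`P(z,θ) = (1/(2π)) · (1 − |z|²)/|z − e^{iθ}|²`. -/
noncomputable def poisson (z : ℂ) (θ : ℝ) : ℝ :=
  (1 / (2 * Real.pi)) * (1 - ‖z‖ ^ 2) /
    ‖z - Complex.exp (θ * Complex.I)‖ ^ 2

open Complex ComplexConjugate Set
open scoped Real

lemma poisson_periodic (z : ℂ) : Function.Periodic (poisson z) (2 * π) := fun t => by
  simp only [poisson, ← Circle.coe_exp, Circle.periodic_exp t]

lemma continuous_poisson {z : ℂ} (hz : ‖z‖ < 1) : Continuous (poisson z) := by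
  refine continuous_const.div (by fun_prop) fun t => ?_
  have : z - exp (t * I) ≠ 0 := sub_ne_zero.2 fun h => by simp [h] at hz
  positivity

theorem exists_int_eq_add_two_pi_mul_of_exp_mul_I_eq {X : Type*} [TopologicalSpace X]
    [PreconnectedSpace X] {f g : X → ℝ} (hf : Continuous f) (hg : Continuous g)
    (h : ∀ x, exp (f x * I) = exp (g x * I)) : ∃ k : ℤ, ∀ x, f x = g x + k * (2 * π) := by
  have hdisc : IsDiscrete (AddSubgroup.zmultiples (2 * π) : Set ℝ) :=
    isDiscrete_iff_discreteTopology.2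
      (inferInstanceAs (DiscreteTopology (AddSubgroup.zmultiples _)))
  have hmaps : MapsTo (f - g) univ (AddSubgroup.zmultiples (2 * π)) := fun x _ => by
    obtain ⟨k, hk⟩ :=
      Circle.exp_eq_exp.1 (Subtype.ext (by simpa only [Circle.coe_exp] using h x))
    exact AddSubgroup.mem_zmultiples_iff.2 ⟨k, by simp [hk]⟩
  obtain ⟨c, hc, hfg⟩ := isPreconnected_univ.eqOn_const_of_mapsTo hdisc (hf.sub hg).continuousOn
    hmaps ⟨0, zero_mem _⟩
  obtain ⟨k, rfl⟩ := AddSubgroup.mem_zmultiples_iff.1 hc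
  refine ⟨k, fun x => ?_⟩
  have := hfg (mem_univ x)
  simp only [Pi.sub_apply, Function.const_apply, zsmul_eq_mul] at this
  linarith

lemma exp_neg_two_mul_arg_mul_I {w : ℂ} (hw : w ≠ 0) :
    exp (↑(-(2 * arg w)) * I) = conj w / w := by
  have : (↑(-(2 * arg w)) : ℂ) * I = conj (log w) - log w := by
    apply Complex.ext <;> simp [log_im]
    ring
  rw [this, Complex.exp_sub, exp_conj, exp_log hw]

noncomputable def diskMobius (a : ℂ) (β : ℝ) (z : ℂ) : ℂ :=
  exp (β * I) * (z - a) / (1 - conj a * z)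

section diskMobius

variable {a : ℂ} (β : ℝ)

lemma one_sub_conj_mul_mem_slitPlane (ha : ‖a‖ < 1) {u : ℂ} (hu : ‖u‖ ≤ 1) :
    1 - conj a * u ∈ slitPlane := by
  rw [sub_eq_add_neg]
  refine mem_slitPlane_of_norm_lt_one ?_
  rw [norm_neg, norm_mul, RCLike.norm_conj]
  nlinarith [norm_nonneg a, norm_nonneg u]

lemma one_sub_sq_norm_diskMobius {u : ℂ} (hu : 1 - conj a * u ≠ 0) :
    1 - ‖diskMobius a β u‖ ^ 2 = (1 - ‖a‖ ^ 2) * (1 - ‖u‖ ^ 2) / ‖1 - conj a * u‖ ^ 2 := by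
  have hw : ‖1 - conj a * u‖ ^ 2 ≠ 0 := by positivity
  rw [diskMobius, norm_div, norm_mul, norm_exp_ofReal_mul_I, one_mul, div_pow, eq_div_iff hw,
    sub_mul, div_mul_cancel₀ _ hw]
  simp only [Complex.sq_norm, normSq_apply, sub_re, sub_im, mul_re, mul_im, one_re, one_im,
    conj_re, conj_im]
  ring

lemma norm_diskMobius_lt_one (ha : ‖a‖ < 1) {u : ℂ} (hu : ‖u‖ < 1) :
    ‖diskMobius a β u‖ < 1 := by
  have hw := slitPlane_ne_zero (one_sub_conj_mul_mem_slitPlane ha hu.le)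
  have hpos : 0 < 1 - ‖diskMobius a β u‖ ^ 2 := by
    rw [one_sub_sq_norm_diskMobius β hw]
    have : ‖a‖ ^ 2 < 1 := by nlinarith [norm_nonneg a]
    have : ‖u‖ ^ 2 < 1 := by nlinarith [norm_nonneg u]
    have : 0 < ‖1 - conj a * u‖ := norm_pos_iff.2 hw
    apply div_pos <;> nlinarith
  nlinarith [norm_nonneg (diskMobius a β u)]

lemma sq_norm_diskMobius_sub {u v : ℂ} (hu : 1 - conj a * u ≠ 0) (hv : 1 - conj a * v ≠ 0) :
    ‖diskMobius a β u - diskMobius a β v‖ ^ 2 =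
      (1 - ‖a‖ ^ 2) ^ 2 * ‖u - v‖ ^ 2 / (‖1 - conj a * u‖ ^ 2 * ‖1 - conj a * v‖ ^ 2) := by
  have : diskMobius a β u - diskMobius a β v =
      exp (β * I) * (1 - conj a * a) * (u - v) / ((1 - conj a * u) * (1 - conj a * v)) := by
    rw [diskMobius, diskMobius, div_sub_div _ _ hu hv]
    ring
  rw [this, conj_mul', norm_div, norm_mul, norm_mul, norm_mul, norm_exp_ofReal_mul_I, one_mul]
  norm_cast
  rw [Real.norm_eq_abs, div_pow, mul_pow, mul_pow, sq_abs]

lemma poisson_diskMobius_mul_deriv (ha : ‖a‖ < 1) {u : ℂ} (hu : ‖u‖ < 1) {s t : ℝ}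
    (hst : exp (s * I) = diskMobius a β (exp (t * I))) :
    poisson (diskMobius a β u) s * ((1 - ‖a‖ ^ 2) / ‖1 - conj a * exp (t * I)‖ ^ 2) =
      poisson u t := by
  have he : ‖exp (t * I)‖ = 1 := norm_exp_ofReal_mul_I t
  have hwu := slitPlane_ne_zero (one_sub_conj_mul_mem_slitPlane ha hu.le)
  have hwe := slitPlane_ne_zero (one_sub_conj_mul_mem_slitPlane ha he.le)
  have hue : u - exp (t * I) ≠ 0 := sub_ne_zero.2 fun h => by simp [h] at hu
  have ha' : 1 - ‖a‖ ^ 2 ≠ 0 := by nlinarith [norm_nonneg a]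
  have : ‖u - exp (t * I)‖ ≠ 0 := norm_ne_zero_iff.2 hue
  have : ‖1 - conj a * u‖ ≠ 0 := norm_ne_zero_iff.2 hwu
  have : ‖1 - conj a * exp (t * I)‖ ≠ 0 := norm_ne_zero_iff.2 hwe
  rw [poisson, poisson, hst, one_sub_sq_norm_diskMobius β hwu, sq_norm_diskMobius_sub β hwu hwe]
  field_simp

end diskMobius

noncomputable def diskMobiusLift (a : ℂ) (β t : ℝ) : ℝ :=
  t + β - 2 * arg (1 - conj a * exp (t * I))

section diskMobiusLift
variable {a : ℂ} (β : ℝ)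

lemma exp_diskMobiusLift_mul_I (ha : ‖a‖ < 1) (t : ℝ) :
    exp (diskMobiusLift a β t * I) = diskMobius a β (exp (t * I)) := by
  set e := exp (t * I)
  have hw : 1 - conj a * e ≠ 0 :=
    slitPlane_ne_zero (one_sub_conj_mul_mem_slitPlane ha (norm_exp_ofReal_mul_I t).le)
  have he : e * conj e = 1 := by
    rw [mul_conj, normSq_eq_norm_sq, norm_exp_ofReal_mul_I]
    norm_num
  have hsplit : (diskMobiusLift a β t : ℂ) * I =
      t * I + β * I + ↑(-(2 * arg (1 - conj a * e))) * I := by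
    simp only [diskMobiusLift]
    push_cast
    ring
  rw [hsplit, Complex.exp_add, Complex.exp_add, exp_neg_two_mul_arg_mul_I hw, diskMobius,
    map_sub, map_one, map_mul, conj_conj, div_eq_mul_inv, div_eq_mul_inv]
  linear_combination (-(a * exp (β * I) * (1 - conj a * e)⁻¹)) * he

lemma hasDerivAt_diskMobiusLift (ha : ‖a‖ < 1) (t : ℝ) :
    HasDerivAt (diskMobiusLift a β) ((1 - ‖a‖ ^ 2) / ‖1 - conj a * exp (t * I)‖ ^ 2) t := by
  set w : ℝ → ℂ := fun s => 1 - conj a * exp (s * I)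
  have hw_mem := one_sub_conj_mul_mem_slitPlane ha (norm_exp_ofReal_mul_I t).le
  have hw : HasDerivAt w (I * (w t - 1)) t := by
    have := (((hasDerivAt_id (t : ℂ)).mul_const I).cexp.comp_ofReal).const_mul (conj a)
    refine (this.const_sub 1).congr_deriv ?_
    simp only [w, id]
    ring
  have harg : HasDerivAt (fun s => arg (w s)) (I * (w t - 1) / w t).im t := by
    simpa only [Function.comp_def, imCLM_apply, log_im] using
      imCLM.hasFDerivAt.comp_hasDerivAt t (hw.clog_real hw_mem)
  refine (((hasDerivAt_id' t).add_const β).sub (harg.const_mul 2)).congr_deriv ?_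
  have hnorm : ‖a‖ = ‖1 - w t‖ := by simp [w, norm_exp_ofReal_mul_I]
  have hw0 : normSq (w t) ≠ 0 := (normSq_pos.2 (slitPlane_ne_zero hw_mem)).ne'
  change _ = (1 - ‖a‖ ^ 2) / ‖w t‖ ^ 2
  rw [hnorm, mul_div_assoc, I_mul_im, div_re, Complex.sq_norm, Complex.sq_norm]
  generalize w t = W at hw0 ⊢
  rw [normSq_sub, normSq_one, one_mul, conj_re, sub_re, sub_im, one_re, one_im]
  field_simp
  rw [normSq_apply]
  ring

lemma continuous_diskMobiusLift (ha : ‖a‖ < 1) : Continuous (diskMobiusLift a β) :=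
  continuous_iff_continuousAt.2 fun t => (hasDerivAt_diskMobiusLift β ha t).continuousAt

end diskMobiusLift

theorem integral_poisson_diskMobius_of_lift {a : ℂ} (ha : ‖a‖ < 1) (β : ℝ) {η : ℝ → ℝ}
    (hη : Continuous η) (hlift : ∀ t : ℝ, exp (η t * I) = diskMobius a β (exp (t * I)))
    {u : ℂ} (hu : ‖u‖ < 1) (α γ : ℝ) :
    ∫ s in η α..η γ, poisson (diskMobius a β u) s = ∫ t in α..γ, poisson u t := by
  obtain ⟨k, hk⟩ := exists_int_eq_add_two_pi_mul_of_exp_mul_I_eq hη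
    (continuous_diskMobiusLift β ha) fun t => by rw [hlift, exp_diskMobiusLift_mul_I β ha]
  have hderiv_cont : Continuous fun t : ℝ => (1 - ‖a‖ ^ 2) / ‖1 - conj a * exp (t * I)‖ ^ 2 :=
    continuous_const.div (by fun_prop) fun t => by
      have := slitPlane_ne_zero (one_sub_conj_mul_mem_slitPlane ha (norm_exp_ofReal_mul_I t).le)
      positivity
  calc ∫ s in η α..η γ, poisson (diskMobius a β u) s
      = ∫ s in diskMobiusLift a β α..diskMobiusLift a β γ, poisson (diskMobius a β u) s := by
        simp only [hk, ← intervalIntegral.integral_comp_add_right,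
          (poisson_periodic (diskMobius a β u)).int_mul k _]
    _ = ∫ t in α..γ, poisson (diskMobius a β u) (diskMobiusLift a β t) *
          ((1 - ‖a‖ ^ 2) / ‖1 - conj a * exp (t * I)‖ ^ 2) :=
        (intervalIntegral.integral_comp_mul_deriv
          (fun t _ => hasDerivAt_diskMobiusLift β ha t) hderiv_cont.continuousOn
          (continuous_poisson (norm_diskMobius_lt_one β ha hu))).symm
    _ = ∫ t in α..γ, poisson u t := by
        congr with t
        exact poisson_diskMobius_mul_deriv β ha hu (exp_diskMobiusLift_mul_I β ha t)

theorem reduced_divergence_conformal_invariance_general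
    (a : ℂ) (ha : ‖a‖ < 1) (β : ℝ)
    (M : ℂ → ℂ)
    (hM : ∀ z : ℂ, M z = Complex.exp (β * Complex.I) * (z - a) / (1 - (starRingEnd ℂ) a * z))
    (η : ℝ → ℝ) (hη : Continuous η)
    (hlift : ∀ t : ℝ, Complex.exp ((η t : ℂ) * Complex.I) = M (Complex.exp (t * Complex.I)))
    (n : ℕ) (θ : ℕ → ℝ)
    (f : ℝ → ℝ)
    (φ φt : ℕ → ℂ → ℝ)
    (hφ : ∀ j u, φ j u = ∫ t in (θ j)..(θ (j + 1)), poisson u t)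
    (hφt : ∀ j u, φt j u = ∫ t in (η (θ j))..(η (θ (j + 1))), poisson u t) :
    ∀ z : ℂ, ‖z‖ < 1 → ∀ y : ℂ, ‖y‖ < 1 →
      ∑ j ∈ Finset.Icc 1 n, φt j (M z) * f (φt j (M y) / φt j (M z)) =
      ∑ j ∈ Finset.Icc 1 n, φ j z * f (φ j y / φ j z) := by
  obtain rfl : M = diskMobius a β := funext hM
  intro z hz y hy
  refine Finset.sum_congr rfl fun j _ => ?_
  simp only [hφ, hφt, integral_poisson_diskMobius_of_lift ha β hη hlift hz,
    integral_poisson_diskMobius_of_lift ha β hη hlift hy]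

/-- **Conformal invariance of the reduced `f`-divergence distance.**
Let `M(z) = e^{iβ}·(z − a)/(1 − conj(a)·z)` with `|a| < 1`, `β ∈ ℝ`, and let `η` be a
continuous lift of the induced boundary circle map (`e^{iη(t)} = M(e^{it})`).  Given a
partition `−π < θ₁ < ⋯ < θ_n ≤ π` of the circle with `θ_{n+1} := θ₁ + 2π`, and `f`
strictly convex on `(0,∞)` with `f(1) = 0`, write `φ_j(u) = ∫_{θ_j}^{θ_{j+1}} P(u,t) dt`
and `φ̃_j(u) = ∫_{η(θ_j)}^{η(θ_{j+1})} P(u,t) dt`.  Then for all `z, y` in the open unit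
disk,
`∑_{j=1}^n φ̃_j(M z)·f(φ̃_j(M y)/φ̃_j(M z)) = ∑_{j=1}^n φ_j(z)·f(φ_j(y)/φ_j(z))`. -/
theorem reduced_divergence_conformal_invariance
    (a : ℂ) (ha : ‖a‖ < 1) (β : ℝ)
    (M : ℂ → ℂ)
    (hM : ∀ z : ℂ, M z = Complex.exp (β * Complex.I) * (z - a) / (1 - (starRingEnd ℂ) a * z))
    (η : ℝ → ℝ) (hη : Continuous η)
    (hlift : ∀ t : ℝ, Complex.exp ((η t : ℂ) * Complex.I) = M (Complex.exp (t * Complex.I)))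
    (n : ℕ) (θ : ℕ → ℝ)
    (hθ1 : -Real.pi < θ 1) (hθn : θ n ≤ Real.pi)
    (hmono : ∀ j, 1 ≤ j → j < n → θ j < θ (j + 1))
    (hper : θ (n + 1) = θ 1 + 2 * Real.pi)
    (f : ℝ → ℝ) (hf : StrictConvexOn ℝ (Set.Ioi 0) f) (hf1 : f 1 = 0)
    (φ φt : ℕ → ℂ → ℝ)
    (hφ : ∀ j u, φ j u = ∫ t in (θ j)..(θ (j + 1)), poisson u t)
    (hφt : ∀ j u, φt j u = ∫ t in (η (θ j))..(η (θ (j + 1))), poisson u t) :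
    ∀ z : ℂ, ‖z‖ < 1 → ∀ y : ℂ, ‖y‖ < 1 →
      ∑ j ∈ Finset.Icc 1 n, φt j (M z) * f (φt j (M y) / φt j (M z)) =
      ∑ j ∈ Finset.Icc 1 n, φ j z * f (φ j y / φ j z) :=
  reduced_divergence_conformal_invariance_general a ha β M hM η hη hlift n θ f φ φt hφ hφt
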